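/- Assume k ≥ 12, q ≥ 2 and α ≤ q^k are constants. Then with probability 1 − o(1/n) over the random k-SAT formula Φ with density α, the following holds for H_Φ = (V, E): for every subset E' ⊆ E of size |E'| ≤ 4^{−k}·α^{−1/2}·n and every sequence of hyperedges e_{i₁}, …, e_{i_ℓ} ∈ E ∖ E' with distinct indices such that, setting V_s = (⋃_{e ∈ E'} e) ∪ (⋃_{j=1}^{s−1} e_{i_j}), one has |e_{i_s} ∩ V_s| ≥ 6 for every s ∈ [ℓ], it holds that ℓ ≤ |E'|. -/

import Mathlib

/-!
If the property fails for `Φ`, let `t = |E'|` and stop the peeling sequence after `t + 1` steps.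
Each peeled clause brings at most `k - 6` new variables, so the `2t + 1` clauses of `E'` and of
this prefix have all their variables in a set of `w = kt + (k - 6)(t + 1)` variables. They land in
a fixed `w`-set with probability `(w/n)^(k(2t+1))`, and `k(2t+1) = w + 3(2t+1) + 3`. With
`C(m, s) ≤ (e m/s)^s` and `C(n, w) (w/n)^w ≤ e^w`, the union bound over `t`, the clauses and the
`w`-set is at most `∑ₜ B^(2t+1) (k(2t+1)/n)³` where `B = e^(k-2) (m/s) (k s/n)³`, `s = 2t + 1`.
For large `n`, the bound `|E'| ≤ 4^(-k) α^(-1/2) n` and `k ≥ 12` give `B ≤ 1/2`, so the failure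
probability is `O(k³/n³)`.
-/

open Filter

noncomputable section
namespace RCSP

/-- The finset of elements of a finite type satisfying a (not necessarily decidable)
predicate. -/
def setFinset {γ : Type*} [Fintype γ] (P : γ → Prop) : Finset γ :=
  (Set.toFinite {x | P x}).toFinset

/-- The probability that a uniformly random element of the finite type `γ`
satisfies `P`. -/
def pr (γ : Type*) (P : γ → Prop) : ℝ :=
  (Nat.card {x : γ // P x} : ℝ) / (Nat.card γ : ℝ)

/-- Expectation of `g` under the uniform distribution on the finite type `γ`. -/
def expF {γ : Type*} [Fintype γ] (g : γ → ℝ) : ℝ :=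
  (∑ x, g x) / (Fintype.card γ : ℝ)

/-! ### k-SAT formulas -/

/-- A `k`-SAT formula with `n` Boolean variables and `m` clauses: each clause is a
`k`-tuple of literals, a literal being a variable together with a polarity. -/
abbrev Formula (k n m : ℕ) := Fin m → Fin k → Fin n × Bool

/-- The assignment `σ` satisfies the clause `c`. -/
def satClause {k n : ℕ} (σ : Fin n → Bool) (c : Fin k → Fin n × Bool) : Prop :=
  ∃ j, σ (c j).1 = (c j).2

/-- The assignment `σ` satisfies the formula `Φ`. -/
def sat {k n m : ℕ} (Φ : Formula k n m) (σ : Fin n → Bool) : Prop :=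
  ∀ i, satClause σ (Φ i)

/-- `σ` satisfies every clause of `Φ` except possibly `c₀`. -/
def satExcept {k n m : ℕ} (Φ : Formula k n m) (c₀ : Fin m) (σ : Fin n → Bool) : Prop :=
  ∀ i, i ≠ c₀ → satClause σ (Φ i)

/-- The set of solutions of `Φ`. -/
def sols {k n m : ℕ} (Φ : Formula k n m) : Finset (Fin n → Bool) :=
  setFinset (sat Φ)

/-- The set of solutions of `Φ` with the clause `c₀` removed. -/
def solsExcept {k n m : ℕ} (Φ : Formula k n m) (c₀ : Fin m) : Finset (Fin n → Bool) :=
  setFinset (satExcept Φ c₀)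

/-- The set of variables of clause `i` of `Φ` (a hyperedge of the incidence hypergraph). -/
def vbl {k n m : ℕ} (Φ : Formula k n m) (i : Fin m) : Finset (Fin n) :=
  Finset.univ.image fun j => (Φ i j).1

/-- The multiset of hyperedges of the incidence hypergraph of `Φ`. -/
def edgeMultiset {k n m : ℕ} (Φ : Formula k n m) : Multiset (Finset (Fin n)) :=
  (Finset.univ : Finset (Fin m)).val.map fun i => vbl Φ i

/-! ### Hypergraphs on `Fin n`, given as an indexed family of `m` hyperedges -/

variable {n m : ℕ}

/-- Degree of a vertex: the number of hyperedges containing it. -/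
def deg (E : Fin m → Finset (Fin n)) (v : Fin n) : ℕ :=
  Nat.card {i : Fin m // v ∈ E i}

/-- The line graph: two hyperedges are adjacent iff they intersect. -/
def lineGraph (E : Fin m → Finset (Fin n)) : SimpleGraph (Fin m) where
  Adj i j := i ≠ j ∧ (E i ∩ E j).Nonempty
  symm := by
    constructor
    rintro i j ⟨hne, x, hx⟩
    rw [Finset.mem_inter] at hx
    exact ⟨hne.symm, x, Finset.mem_inter.mpr ⟨hx.2, hx.1⟩⟩
  loopless := ⟨fun i h => h.1 rfl⟩

/-- A set of hyperedges is connected in the line graph. -/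
def LineConnected (E : Fin m → Finset (Fin n)) (T : Finset (Fin m)) : Prop :=
  ((lineGraph E).induce (T : Set (Fin m))).Connected

/-- Two vertices are adjacent iff some hyperedge contains both. -/
def vtxGraph (E : Fin m → Finset (Fin n)) : SimpleGraph (Fin n) where
  Adj u w := u ≠ w ∧ ∃ i, u ∈ E i ∧ w ∈ E i
  symm := by
    constructor
    rintro u w ⟨hne, i, h1, h2⟩
    exact ⟨hne.symm, i, h2, h1⟩
  loopless := ⟨fun u h => h.1 rfl⟩

/-- A set of vertices induces a connected sub-hypergraph. -/
def VtxConnected (E : Fin m → Finset (Fin n)) (V' : Finset (Fin n)) : Prop :=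
  ((vtxGraph E).induce (V' : Set (Fin n))).Connected

/-- The set of vertices at graph-theoretic distance at least `r` from `v`
(vertices not reachable from `v` are at infinite distance). -/
def farSet (E : Fin m → Finset (Fin n)) (v : Fin n) (r : ℕ) : Finset (Fin n) :=
  setFinset fun u => ¬ (vtxGraph E).Reachable u v ∨ r ≤ (vtxGraph E).dist u v

/-- The closed neighbourhood `Γ⁺` of a set of vertices. -/
def gammaPlus (E : Fin m → Finset (Fin n)) (V' : Finset (Fin n)) : Finset (Fin n) :=
  setFinset fun u => u ∈ V' ∨ ∃ w ∈ V', (vtxGraph E).Adj u w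

/-- The high-degree vertices of `V'`: those of degree at least `p₁ · α`. -/
def HD (E : Fin m → Finset (Fin n)) (p₁ α : ℝ) (V' : Finset (Fin n)) : Finset (Fin n) :=
  setFinset fun v => v ∈ V' ∧ p₁ * α ≤ (deg E v : ℝ)

/-- One step of the bad-vertices/bad-hyperedges closure: every hyperedge (not yet bad)
with more than `ε₁ · k` bad vertices becomes bad, together with all of its vertices. -/
def badStep (E : Fin m → Finset (Fin n)) (k : ℕ) (ε₁ : ℝ)
    (st : Finset (Fin n) × Finset (Fin m)) : Finset (Fin n) × Finset (Fin m) :=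
  let newE : Finset (Fin m) :=
    setFinset fun i => i ∉ st.2 ∧ ε₁ * (k : ℝ) < ((E i ∩ st.1).card : ℝ)
  (st.1 ∪ newE.biUnion E, st.2 ∪ newE)

/-- The set of bad vertices generated from `V₀`. -/
def Vbad (E : Fin m → Finset (Fin n)) (k : ℕ) (ε₁ p₁ α : ℝ)
    (V₀ : Finset (Fin n)) : Finset (Fin n) :=
  ((badStep E k ε₁)^[m] (HD E p₁ α V₀, ∅)).1

/-- The set of bad hyperedges generated from `V₀`. -/
def Ebad (E : Fin m → Finset (Fin n)) (k : ℕ) (ε₁ p₁ α : ℝ)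
    (V₀ : Finset (Fin n)) : Finset (Fin m) :=
  ((badStep E k ε₁)^[m] (HD E p₁ α V₀, ∅)).2

/-- `V'` is a union of connected components of the sub-hypergraph induced by `B`. -/
def UnionOfComponents (E : Fin m → Finset (Fin n)) (B V' : Finset (Fin n)) : Prop :=
  V' ⊆ B ∧ ∀ u w : (B : Set (Fin n)),
    ((vtxGraph E).induce (B : Set (Fin n))).Reachable u w → (↑u ∈ V' → ↑w ∈ V')

/-- A hypergraph (with `n` vertices and `m` hyperedges of size at most `k`)
is `(k, α, ε₁, ε₂, η, ρ, p₁, p₂)`-nice. -/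
structure IsNice (E : Fin m → Finset (Fin n)) (k : ℕ) (α ε₁ ε₂ η ρ p₁ p₂ : ℝ) : Prop where
  /-- every hyperedge has at most `k` vertices -/
  edge_card : ∀ i, (E i).card ≤ k
  /-- bounded maximum degree -/
  max_deg : ∀ v, (deg E v : ℝ) ≤ 4 * (k : ℝ) * α + 6 * Real.log n
  /-- `(η, ρ)`-edge expansion -/
  expansion : ∀ T : Finset (Fin m), (T.card : ℝ) ≤ ρ * (m : ℝ) →
    (1 - η) * (k : ℝ) * (T.card : ℝ) ≤ ((T.biUnion E).card : ℝ)
  /-- bounded neighbourhood growth -/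
  growth : ∀ (i : Fin m) (ℓ : ℕ), 1 ≤ ℓ →
    (Nat.card {T : Finset (Fin m) // i ∈ T ∧ T.card = ℓ ∧ LineConnected E T} : ℝ)
      ≤ (n : ℝ) ^ 3 * (p₂ * α) ^ ℓ
  /-- bounded number of bad vertices -/
  bad_vtx : ∀ V₀ : Finset (Fin n),
    ((Vbad E k ε₁ p₁ α V₀).card : ℝ) ≤ 4 * ε₁⁻¹ * ((HD E p₁ α V₀).card : ℝ)
  /-- bounded fraction of bad hyperedges -/
  bad_frac : ∀ T : Finset (Fin m), LineConnected E T → Real.log n ≤ (T.card : ℝ) →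
    ((T ∩ Ebad E k ε₁ p₁ α Finset.univ).card : ℝ) ≤ ε₂ * (T.card : ℝ)
  /-- no large connected component of bad hyperedges -/
  bad_comp : ∀ T : Finset (Fin m), T ⊆ Ebad E k ε₁ p₁ α Finset.univ →
    LineConnected E T → (T.card : ℝ) < Real.log n

/-- The main structural condition (Condition 3.1) for an atomic CSP over domain `[q]`
whose incidence hypergraph is `E`. -/
def MainCondition (E : Fin m → Finset (Fin n)) (k q : ℕ)
    (α ε₁ ε₂ η ρ p₁ p₂ : ℝ) : Prop :=
  IsNice E k α ε₁ ε₂ η ρ p₁ p₂ ∧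
  30 ≤ k ∧ α ≤ (q : ℝ) ^ k ∧ 4 ≤ η * (k : ℝ) ∧
  Real.exp 1 * (ρ * (k : ℝ) * α) ^ η = 1 ∧
  ε₁ = 2 * η ∧ p₁ = 6 * (k : ℝ) ^ 7 ∧
  ε₂ = 2 / ((k : ℝ) ^ 2 * (1 - η) * η) ∧
  p₂ = Real.exp 1 * (k : ℝ) ^ 2

/-! ### Atomic CSPs -/

/-- `σ` satisfies all the atomic constraints: constraint `i` has variable set `vb i` and
unique violating assignment `bd i` (restricted to `vb i`). -/
def CSPsat {n m q : ℕ} (vb : Fin m → Finset (Fin n)) (bd : Fin m → Fin n → Fin q)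
    (σ : Fin n → Fin q) : Prop :=
  ∀ i, ∃ v ∈ vb i, σ v ≠ bd i v

/-- `σ` satisfies all the atomic constraints except possibly `c₀`. -/
def CSPsatExcept {n m q : ℕ} (vb : Fin m → Finset (Fin n)) (bd : Fin m → Fin n → Fin q)
    (c₀ : Fin m) (σ : Fin n → Fin q) : Prop :=
  ∀ i, i ≠ c₀ → ∃ v ∈ vb i, σ v ≠ bd i v

/-- The set of satisfying assignments of the atomic CSP. -/
def CSPsols {n m q : ℕ} (vb : Fin m → Finset (Fin n)) (bd : Fin m → Fin n → Fin q) :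
    Finset (Fin n → Fin q) :=
  setFinset (CSPsat vb bd)

/-- The set of satisfying assignments of the atomic CSP with constraint `c₀` removed. -/
def CSPsolsExcept {n m q : ℕ} (vb : Fin m → Finset (Fin n)) (bd : Fin m → Fin n → Fin q)
    (c₀ : Fin m) : Finset (Fin n → Fin q) :=
  setFinset (CSPsatExcept vb bd c₀)

/-- Average of `g` over the uniform distribution on the solutions of `Φ`, with default
value `g dflt` if `Φ` is unsatisfiable. -/
def solAvgD {k n m : ℕ} (Φ : Formula k n m) (dflt : Fin n → Bool)
    (g : (Fin n → Bool) → ℝ) : ℝ :=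
  if (sols Φ).Nonempty then (∑ σ ∈ sols Φ, g σ) / ((sols Φ).card : ℝ) else g dflt

/-- The fraction of variables assigned `true`. -/
def trueFrac {n : ℕ} (σ : Fin n → Bool) : ℝ :=
  (Nat.card {v : Fin n // σ v = true} : ℝ) / (n : ℝ)

/-- The total variation distance between the joint law of `(σ v, σ|B̄(v,r))` and the
product of its two marginals, where `σ` is uniform over the solutions of `Φ`
(with the convention that this quantity is `0` if `Φ` is unsatisfiable). -/
def nonRecQty {k n m : ℕ} (Φ : Formula k n m) (v : Fin n) (r : ℕ) : ℝ :=
  (1 / 2) * ∑ b : Bool, ∑ τ : {x // x ∈ farSet (vbl Φ) v r} → Bool,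
    |(Nat.card {σ : Fin n → Bool // sat Φ σ ∧ σ v = b ∧
          ∀ u : {x // x ∈ farSet (vbl Φ) v r}, σ ↑u = τ u} : ℝ) /
        (Nat.card {σ : Fin n → Bool // sat Φ σ} : ℝ) -
      (Nat.card {σ : Fin n → Bool // sat Φ σ ∧ σ v = b} : ℝ) /
          (Nat.card {σ : Fin n → Bool // sat Φ σ} : ℝ) *
        ((Nat.card {σ : Fin n → Bool // sat Φ σ ∧
              ∀ u : {x // x ∈ farSet (vbl Φ) v r}, σ ↑u = τ u} : ℝ) /
          (Nat.card {σ : Fin n → Bool // sat Φ σ} : ℝ))|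

open Finset

section UniformProbability

variable {γ : Type*}

lemma pr_nonneg (P : γ → Prop) : 0 ≤ pr γ P := by
  unfold pr
  positivity

lemma pr_eq_card_filter [Fintype γ] (P : γ → Prop) [DecidablePred P] :
    pr γ P = #(univ.filter P) / Fintype.card γ := by
  rw [pr, Nat.card_eq_fintype_card, Nat.card_eq_fintype_card, Fintype.card_subtype]

lemma pr_eq_zero_of_forall_not {P : γ → Prop} (h : ∀ x, ¬ P x) : pr γ P = 0 := by
  have : IsEmpty {x // P x} := ⟨fun x => h x x.2⟩
  simp [pr]

lemma pr_le_sum_pr [Fintype γ] {ι : Type*} (I : Finset ι) (P : γ → Prop) (Q : ι → γ → Prop)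
    (h : ∀ x, P x → ∃ i ∈ I, Q i x) : pr γ P ≤ ∑ i ∈ I, pr γ (Q i) := by
  classical
  simp only [pr_eq_card_filter, ← sum_div]
  gcongr
  have hsub : univ.filter P ⊆ I.biUnion fun i => univ.filter (Q i) := by
    intro x hx
    obtain ⟨i, hi, hQ⟩ := h x (mem_filter.mp hx).2
    exact mem_biUnion.mpr ⟨i, hi, mem_filter.mpr ⟨mem_univ x, hQ⟩⟩
  exact_mod_cast (card_le_card hsub).trans card_biUnion_le

lemma pr_forall_mem {ι β : Type*} [Fintype ι] [DecidableEq ι] [Fintype β]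
    (A : ι → Finset β) :
    pr (ι → β) (fun x => ∀ i, x i ∈ A i) = ∏ i, (#(A i) : ℝ) / Fintype.card β := by
  classical
  have hfilter : univ.filter (fun x : ι → β => ∀ i, x i ∈ A i) = Fintype.piFinset A := by
    ext x
    simp
  rw [pr_eq_card_filter, hfilter, Fintype.card_piFinset, Fintype.card_fun, prod_div_distrib,
    prod_const, card_univ]
  push_cast
  rfl

end UniformProbability

lemma card_vbl_le {k n m : ℕ} (Φ : Formula k n m) (i : Fin m) : #(vbl Φ i) ≤ k :=
  card_image_le.trans_eq (card_fin k)

lemma pr_vbl_subset {k n m : ℕ} (hn : 0 < n) (S : Finset (Fin m)) (W : Finset (Fin n)) :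
    pr (Formula k n m) (fun Φ => ∀ i ∈ S, vbl Φ i ⊆ W) = ((#W : ℝ) / n) ^ (k * #S) := by
  let A : Fin m → Finset (Fin k → Fin n × Bool) := fun i =>
    if i ∈ S then Fintype.piFinset fun _ => W ×ˢ univ else univ
  have hevent : (fun Φ : Formula k n m => ∀ i ∈ S, vbl Φ i ⊆ W) = fun Φ => ∀ i, Φ i ∈ A i := by
    ext Φ
    refine forall_congr' fun i => ?_
    by_cases hi : i ∈ S <;> simp [A, hi, vbl, image_subset_iff]
  rw [hevent, pr_forall_mem, Fintype.card_fun, Fintype.card_prod, Fintype.card_fin,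
    Fintype.card_bool, Fintype.card_fin, pow_mul, ← prod_const, ← Fintype.prod_ite_mem S]
  refine Fintype.prod_congr _ _ fun i => ?_
  by_cases hi : i ∈ S
  · simp only [A, if_pos hi, Fintype.card_piFinset_const, card_product, card_univ, Fintype.card_bool]
    push_cast
    rw [← div_pow, mul_div_mul_right _ _ two_ne_zero]
  · simp [A, hi, hn.ne']

lemma sum_sum_pr_vbl_subset {k n m : ℕ} (hn : 0 < n) (s w : ℕ) :
    ∑ S ∈ powersetCard s (univ : Finset (Fin m)), ∑ W ∈ powersetCard w (univ : Finset (Fin n)),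
      pr (Formula k n m) (fun Φ => ∀ i ∈ S, vbl Φ i ⊆ W)
        = (m.choose s : ℝ) * n.choose w * ((w : ℝ) / n) ^ (k * s) := by
  rw [sum_congr rfl fun S hS => sum_congr rfl fun W hW => by
    rw [pr_vbl_subset hn, (mem_powersetCard.mp hS).2, (mem_powersetCard.mp hW).2]]
  simp only [sum_const, card_powersetCard, card_univ, Fintype.card_fin, nsmul_eq_mul]
  ring

section Peeling

variable {n m ℓ : ℕ} (E : Fin m → Finset (Fin n)) (E' : Finset (Fin m)) (f : Fin ℓ → Fin m)

def coveredVertices (r : ℕ) : Finset (Fin n) :=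
  E'.biUnion E ∪ (univ.filter fun j : Fin ℓ => j.val < r).biUnion fun j => E (f j)

lemma coveredVertices_zero : coveredVertices E E' f 0 = E'.biUnion E := by
  simp [coveredVertices]

lemma coveredVertices_succ {r : ℕ} (hr : r < ℓ) :
    coveredVertices E E' f (r + 1) = E (f ⟨r, hr⟩) ∪ coveredVertices E E' f r := by
  have hfilter : (univ.filter fun j : Fin ℓ => j.val < r + 1)
      = insert ⟨r, hr⟩ (univ.filter fun j : Fin ℓ => j.val < r) := by
    ext j
    simp only [mem_filter, mem_univ, true_and, mem_insert, Fin.ext_iff]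
    omega
  rw [coveredVertices, coveredVertices, hfilter, biUnion_insert, union_left_comm]

variable {E E' f}

lemma card_coveredVertices_le {k d : ℕ} (hE : ∀ i, #(E i) ≤ k)
    (hpeel : ∀ s : Fin ℓ, d ≤ #(E (f s) ∩ coveredVertices E E' f s)) :
    ∀ r ≤ ℓ, #(coveredVertices E E' f r) ≤ k * #E' + (k - d) * r := by
  intro r
  induction r with
  | zero =>
    intro _
    rw [coveredVertices_zero, mul_zero, add_zero, mul_comm]
    exact card_biUnion_le_card_mul _ _ _ fun i _ => hE i
  | succ r ih =>
    intro hr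
    have hrℓ : r < ℓ := hr
    rw [coveredVertices_succ E E' f hrℓ, ← card_sdiff_add_card]
    have hnew : #(E (f ⟨r, hrℓ⟩) \ coveredVertices E E' f r) ≤ k - d := by
      have hsplit := card_inter_add_card_sdiff (E (f ⟨r, hrℓ⟩)) (coveredVertices E E' f r)
      have : d ≤ #(E (f ⟨r, hrℓ⟩) ∩ coveredVertices E E' f r) := hpeel ⟨r, hrℓ⟩
      have := hE (f ⟨r, hrℓ⟩)
      omega
    have := ih (by omega)
    rw [mul_add_one]
    omega

lemma exists_card_eq_forall_subset_coveredVertices (hinj : Function.Injective f)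
    (havoid : ∀ s, f s ∉ E') {r : ℕ} (hr : r ≤ ℓ) :
    ∃ S : Finset (Fin m), #S = #E' + r ∧ ∀ i ∈ S, E i ⊆ coveredVertices E E' f r := by
  let F := univ.filter fun j : Fin ℓ => j.val < r
  refine ⟨E' ∪ F.image f, ?_, fun i hi => ?_⟩
  · have hdisj : Disjoint E' (F.image f) := by
      simpa [disjoint_right] using fun j _ => havoid j
    rw [card_union_of_disjoint hdisj, card_image_of_injective _ hinj, Fin.card_filter_val_lt,
      min_eq_right hr]
  · rcases mem_union.mp hi with hi | hi
    · exact subset_union_left.trans' (subset_biUnion_of_mem E hi)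
    · obtain ⟨j, hj, rfl⟩ := mem_image.mp hi
      exact subset_union_right.trans' (subset_biUnion_of_mem (fun j => E (f j)) hj)

end Peeling

def PeelingBounded {n m : ℕ} (E : Fin m → Finset (Fin n)) (c : ℝ) : Prop :=
  ∀ E' : Finset (Fin m), (#E' : ℝ) ≤ c →
    ∀ (ℓ : ℕ) (f : Fin ℓ → Fin m), Function.Injective f → (∀ s, f s ∉ E') →
      (∀ s : Fin ℓ, 6 ≤ #(E (f s) ∩ coveredVertices E E' f s)) → ℓ ≤ #E'

lemma peelingBounded_of_eq_zero {n m : ℕ} {E : Fin m → Finset (Fin n)} (hm : m = 0) (c : ℝ) :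
    PeelingBounded E c := fun _ _ ℓ f hf _ _ => by
  have := Fintype.card_le_of_injective f hf
  simp only [Fintype.card_fin, hm] at this
  omega

lemma exists_of_not_peelingBounded {n m k : ℕ} {E : Fin m → Finset (Fin n)} {c : ℝ}
    (hE : ∀ i, #(E i) ≤ k) (h : ¬ PeelingBounded E c) :
    ∃ t : ℕ, (t : ℝ) ≤ c ∧ ∃ S : Finset (Fin m), #S = 2 * t + 1 ∧
      ∃ U : Finset (Fin n), #U ≤ k * t + (k - 6) * (t + 1) ∧ ∀ i ∈ S, E i ⊆ U := by
  simp only [PeelingBounded, not_forall, not_le] at h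
  obtain ⟨E', hc, ℓ, f, hinj, havoid, hpeel, hlt⟩ := h
  obtain ⟨S, hS, hSU⟩ := exists_card_eq_forall_subset_coveredVertices hinj havoid hlt
  exact ⟨#E', hc, S, by omega, _, card_coveredVertices_le hE hpeel _ hlt, hSU⟩

open Real

lemma choose_le_exp_mul_div_pow (m s : ℕ) : (m.choose s : ℝ) ≤ (rexp 1 * m / s) ^ s := by
  rcases s.eq_zero_or_pos with rfl | hs
  · simp
  have hs' : (0 : ℝ) < s := by exact_mod_cast hs
  have hfact : (s : ℝ) ^ s / s.factorial ≤ rexp 1 ^ s := by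
    rw [exp_one_pow]
    exact pow_div_factorial_le_exp _ hs'.le s
  calc (m.choose s : ℝ) ≤ (m : ℝ) ^ s / s.factorial := Nat.choose_le_pow_div s m
    _ = ((s : ℝ) ^ s / s.factorial) * (m / s) ^ s := by
        rw [div_pow]
        field_simp
    _ ≤ rexp 1 ^ s * (m / s) ^ s := by gcongr
    _ = (rexp 1 * m / s) ^ s := by rw [← mul_pow, mul_div_assoc]

lemma choose_mul_div_pow_le_exp_pow (n w : ℕ) :
    (n.choose w : ℝ) * ((w : ℝ) / n) ^ w ≤ rexp 1 ^ w := by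
  rcases n.eq_zero_or_pos with rfl | hn
  · rcases w.eq_zero_or_pos with rfl | hw
    · simp
    · simp [Nat.choose_eq_zero_of_lt hw, (exp_pos _).le]
  calc (n.choose w : ℝ) * ((w : ℝ) / n) ^ w ≤ (n : ℝ) ^ w / w.factorial * ((w : ℝ) / n) ^ w := by
        gcongr
        exact Nat.choose_le_pow_div w n
    _ = (w : ℝ) ^ w / w.factorial := by
        rw [div_pow]
        field_simp
    _ ≤ rexp 1 ^ w := by
        rw [exp_one_pow]
        exact pow_div_factorial_le_exp _ (Nat.cast_nonneg w) w

lemma choose_mul_choose_mul_div_pow_le {k m n s w : ℕ} {α : ℝ} (hn : 0 < n)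
    (hks : k * s = w + 3 * s + 3) (hm : (m : ℝ) ≤ α * n)
    (hkey : rexp 1 ^ (k - 2) * k ^ 3 * α * s ^ 2 ≤ n ^ 2 / 2) :
    (m.choose s : ℝ) * n.choose w * ((w : ℝ) / n) ^ (k * s) ≤ (1 / 2) ^ s * (k * s / n) ^ 3 := by
  have hk : 3 ≤ k := by
    by_contra! hk
    nlinarith [Nat.mul_le_mul_right s hk.le]
  have hwk : w ≤ (k - 3) * s := by
    rw [Nat.sub_mul]
    omega
  set x : ℝ := k * s / n with hx
  have hwx : (w : ℝ) / n ≤ x := by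
    rw [hx]
    gcongr
    exact_mod_cast (by omega : w ≤ k * s)
  have hratio : rexp 1 ^ (k - 2) * (m / s) * x ^ 3 ≤ 1 / 2 := by
    have hmn : (m : ℝ) * n ^ 2 ≤ α * n * n ^ 2 := by gcongr
    calc rexp 1 ^ (k - 2) * (m / s) * x ^ 3
        = rexp 1 ^ (k - 2) * k ^ 3 * s ^ 2 * (m * n ^ 2) / n ^ 5 := by
          rw [hx]
          field_simp
      _ ≤ rexp 1 ^ (k - 2) * k ^ 3 * s ^ 2 * (α * n * n ^ 2) / n ^ 5 := by gcongr
      _ = (rexp 1 ^ (k - 2) * k ^ 3 * α * s ^ 2) / n ^ 2 := by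
          field_simp
      _ ≤ 1 / 2 := by
          rw [div_le_iff₀ (by positivity)]
          linarith
  have hexp : rexp 1 ^ (k - 2) = rexp 1 * rexp 1 ^ (k - 3) := by
    rw [← pow_succ']
    congr 1
    omega
  calc (m.choose s : ℝ) * n.choose w * ((w : ℝ) / n) ^ (k * s)
      = m.choose s * (n.choose w * ((w : ℝ) / n) ^ w) * ((w : ℝ) / n) ^ (3 * s + 3) := by
        rw [hks, add_assoc, pow_add]
        ring
    _ ≤ (rexp 1 * m / s) ^ s * rexp 1 ^ ((k - 3) * s) * x ^ (3 * s + 3) := by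
        gcongr
        · exact choose_le_exp_mul_div_pow m s
        · exact (choose_mul_div_pow_le_exp_pow n w).trans
            (pow_le_pow_right₀ (one_le_exp zero_le_one) hwk)
    _ = (rexp 1 ^ (k - 2) * (m / s) * x ^ 3) ^ s * x ^ 3 := by
        rw [hexp, pow_mul, pow_add, pow_mul]
        ring
    _ ≤ (1 / 2) ^ s * x ^ 3 := by gcongr

lemma thirtytwo_mul_cube_mul_exp_pow_le {k : ℕ} (hk : 12 ≤ k) :
    32 * (k : ℝ) ^ 3 * rexp 1 ^ (k - 2) ≤ 16 ^ k := by
  have hnat : 32 * k ^ 3 * 3 ^ (k - 2) ≤ 16 ^ k := by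
    induction k, hk using Nat.le_induction with
    | base => norm_num
    | succ k hk ih =>
      have hcube : (k + 1) ^ 3 ≤ 2 * k ^ 3 := by
        have := Nat.mul_le_mul_right (k ^ 2) hk
        nlinarith
      have hpow : 3 ^ (k + 1 - 2) = 3 * 3 ^ (k - 2) := by
        rw [← pow_succ']
        congr 1
        omega
      calc 32 * (k + 1) ^ 3 * 3 ^ (k + 1 - 2) ≤ 32 * (2 * k ^ 3) * (3 * 3 ^ (k - 2)) := by
            rw [hpow]
            gcongr
        _ = 6 * (32 * k ^ 3 * 3 ^ (k - 2)) := by ring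
        _ ≤ 16 * 16 ^ k := by omega
        _ = 16 ^ (k + 1) := by ring
  calc 32 * (k : ℝ) ^ 3 * rexp 1 ^ (k - 2) ≤ 32 * (k : ℝ) ^ 3 * 3 ^ (k - 2) := by
        gcongr
        exact (exp_one_lt_d9.trans (by norm_num)).le
    _ ≤ 16 ^ k := by exact_mod_cast hnat

lemma sq_mul_mul_pow_le_of_le_inv_sqrt {k t : ℕ} {α n : ℝ}
    (ht : (t : ℝ) ≤ ((4 : ℝ) ^ k)⁻¹ * (√α)⁻¹ * n) : (t : ℝ) ^ 2 * α * 16 ^ k ≤ n ^ 2 := by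
  rcases le_or_gt α 0 with hα | hα
  · have : (t : ℝ) ^ 2 * α ≤ 0 := mul_nonpos_of_nonneg_of_nonpos (sq_nonneg _) hα
    nlinarith [pow_pos (by norm_num : (0 : ℝ) < 16) k]
  have hpos : 0 < (4 : ℝ) ^ k * √α := by positivity
  have hprod : (t : ℝ) * ((4 : ℝ) ^ k * √α) ≤ n := by
    rwa [← mul_inv, ← div_eq_inv_mul, le_div_iff₀ hpos] at ht
  calc (t : ℝ) ^ 2 * α * 16 ^ k = (t * ((4 : ℝ) ^ k * √α)) ^ 2 := by
        rw [mul_pow, mul_pow, sq_sqrt hα.le, ← pow_mul, mul_comm k 2, pow_mul]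
        norm_num
        ring
    _ ≤ n ^ 2 := pow_le_pow_left₀ (by positivity) hprod 2

lemma exp_pow_mul_cube_mul_sq_le {k t : ℕ} {α n : ℝ} (hk : 12 ≤ k) (hα : 0 ≤ α)
    (ht : (t : ℝ) ^ 2 * α * 16 ^ k ≤ n ^ 2) (hn : 4 * rexp 1 ^ (k - 2) * k ^ 3 * α ≤ n ^ 2) :
    rexp 1 ^ (k - 2) * k ^ 3 * α * (2 * t + 1) ^ 2 ≤ n ^ 2 / 2 := by
  have hnum := thirtytwo_mul_cube_mul_exp_pow_le hk
  have hsq : ((2 : ℝ) * t + 1) ^ 2 ≤ 8 * t ^ 2 + 1 := by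
    have : (t : ℝ) ≤ t ^ 2 := by
      rcases t.eq_zero_or_pos with rfl | ht
      · simp
      · nlinarith [show (1 : ℝ) ≤ t by exact_mod_cast ht]
    nlinarith
  set c := rexp 1 ^ (k - 2) * (k : ℝ) ^ 3
  have hc : 0 ≤ c := by positivity
  have h16 : (0 : ℝ) < 16 ^ k := by positivity
  have hbig : 8 * c * (t ^ 2 * α) ≤ n ^ 2 / 4 := by
    have : 8 * c * (t ^ 2 * α) * 16 ^ k ≤ n ^ 2 / 4 * 16 ^ k := by
      nlinarith [mul_le_mul_of_nonneg_left ht (by positivity : (0 : ℝ) ≤ 8 * c)]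
    exact le_of_mul_le_mul_right this h16
  calc c * α * (2 * t + 1) ^ 2 ≤ c * α * (8 * t ^ 2 + 1) := by gcongr
    _ = 8 * c * (t ^ 2 * α) + c * α := by ring
    _ ≤ n ^ 2 / 4 + n ^ 2 / 4 := by gcongr; linarith
    _ = n ^ 2 / 2 := by ring

lemma mul_le_of_exp_pow_mul_cube_mul_sq_le {k n s : ℕ} {α : ℝ} (hs : (s : ℝ) ≤ α * n)
    (hkey : rexp 1 ^ (k - 2) * k ^ 3 * α * s ^ 2 ≤ n ^ 2 / 2) : k * s ≤ n := by
  have hαn : 0 ≤ α * n := (Nat.cast_nonneg s).trans hs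
  have hcube : ((k * s : ℕ) : ℝ) ^ 3 ≤ (n : ℝ) ^ 3 :=
    calc ((k * s : ℕ) : ℝ) ^ 3 = (k : ℝ) ^ 3 * s ^ 2 * s := by push_cast; ring
      _ ≤ (k : ℝ) ^ 3 * s ^ 2 * (α * n) := by gcongr
      _ ≤ rexp 1 ^ (k - 2) * ((k : ℝ) ^ 3 * s ^ 2 * (α * n)) :=
          le_mul_of_one_le_left (by positivity) (one_le_pow₀ (one_le_exp zero_le_one))
      _ = rexp 1 ^ (k - 2) * k ^ 3 * α * s ^ 2 * n := by ring
      _ ≤ n ^ 2 / 2 * n := by gcongr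
      _ ≤ (n : ℝ) ^ 3 := by nlinarith [pow_nonneg (Nat.cast_nonneg (α := ℝ) n) 3]
  exact_mod_cast le_of_pow_le_pow_left₀ three_ne_zero (Nat.cast_nonneg n) hcube

lemma sum_half_pow_odd_mul_cube_le_tsum (T : Finset ℕ) (k n : ℕ) :
    ∑ t ∈ T, (1 / 2 : ℝ) ^ (2 * t + 1) * ((k : ℝ) * (2 * t + 1 : ℕ) / n) ^ 3
      ≤ (k : ℝ) ^ 3 / n ^ 3 * ∑' s : ℕ, (s : ℝ) ^ 3 * (1 / 2) ^ s := by
  have hsummable : Summable fun s : ℕ => (s : ℝ) ^ 3 * (1 / 2) ^ s :=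
    summable_pow_mul_geometric_of_norm_lt_one 3 (by norm_num)
  have hinj : Set.InjOn (fun t : ℕ => 2 * t + 1) T := fun a _ b _ h => by simpa using h
  calc ∑ t ∈ T, (1 / 2 : ℝ) ^ (2 * t + 1) * ((k : ℝ) * (2 * t + 1 : ℕ) / n) ^ 3
      = (k : ℝ) ^ 3 / n ^ 3 * ∑ s ∈ T.image fun t => 2 * t + 1, ((s : ℕ) : ℝ) ^ 3 * (1 / 2) ^ s := by
        rw [sum_image hinj, mul_sum]
        refine sum_congr rfl fun t _ => ?_
        ring
    _ ≤ (k : ℝ) ^ 3 / n ^ 3 * ∑' s : ℕ, (s : ℝ) ^ 3 * (1 / 2) ^ s := by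
        gcongr
        exact hsummable.sum_le_tsum _ fun s _ => by positivity

lemma pr_not_peelingBounded_le {k n m : ℕ} {α : ℝ} (hk : 12 ≤ k) (hn : 0 < n)
    (hm : (m : ℝ) ≤ α * n) (hnα : 4 * rexp 1 ^ (k - 2) * k ^ 3 * α ≤ n ^ 2) :
    pr (Formula k n m) (fun Φ => ¬ PeelingBounded (vbl Φ) (((4 : ℝ) ^ k)⁻¹ * (√α)⁻¹ * n))
      ≤ (k : ℝ) ^ 3 / n ^ 3 * ∑' s : ℕ, (s : ℝ) ^ 3 * (1 / 2) ^ s := by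
  have hα : 0 ≤ α := nonneg_of_mul_nonneg_left ((Nat.cast_nonneg m).trans hm) (by positivity)
  let w (t : ℕ) : ℕ := k * t + (k - 6) * (t + 1)
  have hks (t : ℕ) : k * (2 * t + 1) = w t + 3 * (2 * t + 1) + 3 := by
    simp only [w]
    zify [show 6 ≤ k by omega]
    ring
  let T := (range m).filter fun t : ℕ => (t : ℝ) ^ 2 * α * 16 ^ k ≤ n ^ 2
  have hkey (t : ℕ) (ht : t ∈ T) :
      rexp 1 ^ (k - 2) * k ^ 3 * α * ((2 * t + 1 : ℕ) : ℝ) ^ 2 ≤ n ^ 2 / 2 := by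
    push_cast
    exact exp_pow_mul_cube_mul_sq_le hk hα (mem_filter.mp ht).2 hnα
  -- If `Φ` fails, some `t ∈ T`, some `2t+1` clauses and some `w t` variables witness it.
  let I := T.sigma fun t =>
    powersetCard (2 * t + 1) (univ : Finset (Fin m)) ×ˢ powersetCard (w t) (univ : Finset (Fin n))
  calc pr (Formula k n m) (fun Φ => ¬ PeelingBounded (vbl Φ) (((4 : ℝ) ^ k)⁻¹ * (√α)⁻¹ * n))
      ≤ ∑ p ∈ I, pr (Formula k n m) fun Φ => ∀ i ∈ p.2.1, vbl Φ i ⊆ p.2.2 := by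
        refine pr_le_sum_pr _ _ _ fun Φ hΦ => ?_
        obtain ⟨t, htc, S, hS, U, hU, hSU⟩ := exists_of_not_peelingBounded (card_vbl_le Φ) hΦ
        have hsm : 2 * t + 1 ≤ m := hS ▸ (card_le_univ S).trans_eq (Fintype.card_fin m)
        have ht : t ∈ T :=
          mem_filter.mpr ⟨mem_range.mpr (by omega), sq_mul_mul_pow_le_of_le_inv_sqrt htc⟩
        have hwn : w t ≤ n := by
          have hs : ((2 * t + 1 : ℕ) : ℝ) ≤ α * n := (Nat.cast_le.mpr hsm).trans hm
          have := mul_le_of_exp_pow_mul_cube_mul_sq_le hs (hkey t ht)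
          have := hks t
          omega
        obtain ⟨W, hUW, -, hW⟩ :=
          exists_subsuperset_card_eq (subset_univ U) hU (by simpa using hwn)
        refine ⟨⟨t, S, W⟩, mem_sigma.mpr ⟨ht, mem_product.mpr ⟨?_, ?_⟩⟩,
          fun i hi => (hSU i hi).trans hUW⟩
        · exact mem_powersetCard.mpr ⟨subset_univ S, hS⟩
        · exact mem_powersetCard.mpr ⟨subset_univ W, hW⟩
    _ = ∑ t ∈ T, (m.choose (2 * t + 1) : ℝ) * n.choose (w t)
          * ((w t : ℝ) / n) ^ (k * (2 * t + 1)) := by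
        rw [sum_sigma]
        exact sum_congr rfl fun t _ => by rw [sum_product, sum_sum_pr_vbl_subset hn]
    _ ≤ ∑ t ∈ T, (1 / 2 : ℝ) ^ (2 * t + 1) * ((k : ℝ) * (2 * t + 1 : ℕ) / n) ^ 3 :=
        sum_le_sum fun t ht => choose_mul_choose_mul_div_pow_le hn (hks t) hm (hkey t ht)
    _ ≤ (k : ℝ) ^ 3 / n ^ 3 * ∑' s : ℕ, (s : ℝ) ^ 3 * (1 / 2) ^ s :=
        sum_half_pow_odd_mul_cube_le_tsum T k n

/-- The peeling property: with probability `1 - o(1/n)`, for any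
small set `E'` of hyperedges, any sequence of distinct further hyperedges each meeting
the previously covered vertices in at least `6` vertices has length at most `|E'|`. -/
theorem statement16 :
    ∀ (k q : ℕ) (α : ℝ), 12 ≤ k → 2 ≤ q → α ≤ (q : ℝ) ^ k →
      Filter.Tendsto
        (fun n : ℕ =>
          (n : ℝ) *
            pr (Formula k n ⌊α * (n : ℝ)⌋₊) fun Φ =>
              ¬ ∀ E' : Finset (Fin ⌊α * (n : ℝ)⌋₊),
                  (E'.card : ℝ) ≤ ((4 : ℝ) ^ k)⁻¹ * (Real.sqrt α)⁻¹ * (n : ℝ) →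
                  ∀ (ℓ : ℕ) (f : Fin ℓ → Fin ⌊α * (n : ℝ)⌋₊),
                    Function.Injective f →
                    (∀ s, f s ∉ E') →
                    (∀ s : Fin ℓ,
                      6 ≤ ((vbl Φ (f s)) ∩
                          (E'.biUnion (vbl Φ) ∪
                            (Finset.univ.filter fun j : Fin ℓ => j < s).biUnion
                              fun j => vbl Φ (f j))).card) →
                    ℓ ≤ E'.card)
        Filter.atTop (nhds 0) := by
  intro k q α hk _ _
  change Tendsto (fun n : ℕ => (n : ℝ) * pr (Formula k n ⌊α * n⌋₊)
    fun Φ => ¬ PeelingBounded (vbl Φ) (((4 : ℝ) ^ k)⁻¹ * (√α)⁻¹ * n)) atTop (nhds 0)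
  rcases le_or_gt α 0 with hα | hα
  · have hzero (n : ℕ) : pr (Formula k n ⌊α * n⌋₊)
        (fun Φ => ¬ PeelingBounded (vbl Φ) (((4 : ℝ) ^ k)⁻¹ * (√α)⁻¹ * n)) = 0 :=
      pr_eq_zero_of_forall_not fun _ h => h <| peelingBounded_of_eq_zero
        (Nat.floor_of_nonpos (mul_nonpos_of_nonpos_of_nonneg hα n.cast_nonneg)) _
    simpa only [hzero, mul_zero] using tendsto_const_nhds
  have hsq : Tendsto (fun n : ℕ => (n : ℝ) ^ 2) atTop atTop :=
    (tendsto_pow_atTop two_ne_zero).comp tendsto_natCast_atTop_atTop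
  set C := ∑' s : ℕ, (s : ℝ) ^ 3 * (1 / 2) ^ s
  refine squeeze_zero' (Eventually.of_forall fun n => mul_nonneg n.cast_nonneg (pr_nonneg _)) ?_
    ((tendsto_const_nhds (x := (k : ℝ) ^ 3 * C)).div_atTop hsq)
  filter_upwards [eventually_gt_atTop 0, hsq.eventually_ge_atTop (4 * rexp 1 ^ (k - 2) * k ^ 3 * α)]
    with n hn hnα
  have hm : (⌊α * n⌋₊ : ℝ) ≤ α * n := Nat.floor_le (by positivity)
  calc (n : ℝ) * pr _ _
      ≤ n * ((k : ℝ) ^ 3 / n ^ 3 * C) := by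
        gcongr
        exact pr_not_peelingBounded_le hk hn hm hnα
    _ = (k : ℝ) ^ 3 * C / n ^ 2 := by
        field_simp

end RCSP
end
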